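/- arXiv:1712.08787 — 3 statements merged into one kernel-verified Lean document; each statement's English description precedes it below -/
import Mathlib

section
/- For all natural numbers h ≥ 1, r, i with i ≤ h-1 (interpreting q-binomials as 0 when the lower index exceeds the upper), the identity q^i · qbinom(h-1, i) · qbinom(h+r-i-1, h) + qbinom(h-1, i-1) · qbinom(h+r-i, h) = qbinom(r, i) · qbinom(h+r-i-1, h-i) holds as polynomials in q. -/
open Finset

/-!
Writing every Gaussian binomial as a quotient of `q`-factorials and cancelling the common
factors, the case `0 < i < r` becomes the relation
`q^i [a+1] [b+1] + [i] [i+a+b+2] = [i+a+1] [i+b+1]` between `q`-integers, a consequence of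
`[m+n] = [m] + q^m [n]` and `(q-1) [n] = q^n - 1`. The remaining cases are degenerate: for `i = 0`
both sides are `qbinom(h+r-1, h)`, for `r < i` every term vanishes, and for `r = i` the identity
is the symmetry `qbinom(h-1, i-1) = qbinom(h-1, h-i)`.
-/

/-- The `q`-analogue `[n]_q = 1 + q + ⋯ + q^(n-1)` as a rational function in `q`. -/
noncomputable def qInt (n : ℕ) : RatFunc ℚ := ∑ i ∈ Finset.range n, RatFunc.X ^ i

/-- The `q`-factorial `[n]_q! = [n]_q [n-1]_q ⋯ [1]_q`. -/
noncomputable def qFact : ℕ → RatFunc ℚ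
  | 0 => 1
  | n + 1 => qInt (n + 1) * qFact n

/-- The Gaussian binomial coefficient, defined as `[n]_q! / ([k]_q! [n-k]_q!)`,
with the convention that it vanishes when `n < k` (and when the lower index is negative). -/
noncomputable def qBinom (n k : ℕ) : RatFunc ℚ :=
  if k ≤ n then qFact n / (qFact k * qFact (n - k)) else 0

lemma geom_sum_range_add {R : Type*} [Semiring R] (x : R) (m n : ℕ) :
    ∑ k ∈ range (m + n), x ^ k
      = ∑ k ∈ range m, x ^ k + x ^ m * ∑ k ∈ range n, x ^ k := by
  simp only [sum_range_add, pow_add, mul_sum]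

lemma pow_mul_geom_sum_mul_geom_sum_add {R : Type*} [CommRing R] (x : R) (i a b : ℕ) :
    x ^ i * (∑ k ∈ range (a + 1), x ^ k) * (∑ k ∈ range (b + 1), x ^ k)
        + (∑ k ∈ range i, x ^ k) * (∑ k ∈ range (i + a + b + 2), x ^ k)
      = (∑ k ∈ range (i + a + 1), x ^ k) * (∑ k ∈ range (i + b + 1), x ^ k) := by
  rw [show i + a + b + 2 = i + (a + 1 + (b + 1)) by omega, add_assoc i a, add_assoc i b,
    geom_sum_range_add x i, geom_sum_range_add x i, geom_sum_range_add x i,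
    geom_sum_range_add x (a + 1)]
  linear_combination x ^ i * (∑ k ∈ range (b + 1), x ^ k) *
    ((∑ k ∈ range (a + 1), x ^ k) * mul_geom_sum x i
      - (∑ k ∈ range i, x ^ k) * mul_geom_sum x (a + 1))

lemma qInt_ne_zero {n : ℕ} (hn : n ≠ 0) : qInt n ≠ 0 := by
  have hpoly : (∑ k ∈ range n, Polynomial.X ^ k : Polynomial ℚ) ≠ 0 :=
    (Polynomial.monic_geom_sum_X hn).ne_zero
  simpa [qInt, RatFunc.algebraMap_X] using RatFunc.algebraMap_ne_zero hpoly

lemma qFact_succ (n : ℕ) : qFact (n + 1) = qInt (n + 1) * qFact n := rfl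

lemma qFact_ne_zero (n : ℕ) : qFact n ≠ 0 := by
  induction n with
  | zero => exact one_ne_zero
  | succ n ih => exact mul_ne_zero (qInt_ne_zero n.succ_ne_zero) ih

lemma qBinom_of_lt {n k : ℕ} (h : n < k) : qBinom n k = 0 :=
  if_neg h.not_ge

lemma qBinom_eq_div {n k m : ℕ} (h : k + m = n) : qBinom n k = qFact n / (qFact k * qFact m) := by
  rw [qBinom, if_pos (by omega), show n - k = m by omega]

lemma qBinom_zero_right (n : ℕ) : qBinom n 0 = 1 := by
  rw [qBinom_eq_div (zero_add n), qFact, one_mul, div_self (qFact_ne_zero n)]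

lemma qBinom_self (n : ℕ) : qBinom n n = 1 := by
  rw [qBinom_eq_div (add_zero n), qFact, mul_one, div_self (qFact_ne_zero n)]

lemma qBinom_symm {n k m : ℕ} (h : k + m = n) : qBinom n k = qBinom n m := by
  rw [qBinom_eq_div h, qBinom_eq_div ((add_comm m k).trans h), mul_comm]

lemma qBinom_magic_identity_of_pos_of_lt (j a b : ℕ) :
    RatFunc.X ^ (j + 1) * qBinom (j + a + 1) (j + 1) * qBinom (j + a + b + 2) (j + a + 2)
      + qBinom (j + a + 1) j * qBinom (j + a + b + 3) (j + a + 2)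
    = qBinom (j + b + 2) (j + 1) * qBinom (j + a + b + 2) (a + 1) := by
  rw [qBinom_eq_div (show (j + 1) + a = j + a + 1 by omega),
    qBinom_eq_div (show (j + a + 2) + b = j + a + b + 2 by omega),
    qBinom_eq_div (show j + (a + 1) = j + a + 1 by omega),
    qBinom_eq_div (show (j + a + 2) + (b + 1) = j + a + b + 3 by omega),
    qBinom_eq_div (show (j + 1) + (b + 1) = j + b + 2 by omega),
    qBinom_eq_div (show (a + 1) + (j + b + 1) = j + a + b + 2 by omega)]
  have key := pow_mul_geom_sum_mul_geom_sum_add (RatFunc.X : RatFunc ℚ) (j + 1) a b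
  simp only [← qInt.eq_1] at key
  rw [show j + 1 + a + b + 2 = j + a + b + 3 by omega, show j + 1 + a + 1 = j + a + 2 by omega,
    show j + 1 + b + 1 = j + b + 2 by omega] at key
  rw [qFact_succ (j + a + b + 2), qFact_succ (j + a + 1), qFact_succ (j + b + 1), qFact_succ j,
    qFact_succ a, qFact_succ b]
  field_simp [qFact_ne_zero, qInt_ne_zero]
  exact key

theorem qBinom_magic_identity_general (h r i : ℕ) (hi : i ≤ h - 1) :
    RatFunc.X ^ i * qBinom (h - 1) i * qBinom (h + r - i - 1) h
      + (if i = 0 then 0 else qBinom (h - 1) (i - 1)) * qBinom (h + r - i) h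
    = qBinom r i * qBinom (h + r - i - 1) (h - i) := by
  rcases i with _ | j
  · simp [qBinom_zero_right]
  obtain ⟨a, rfl⟩ : ∃ a, h = j + a + 2 := ⟨h - j - 2, by omega⟩
  rw [if_neg j.succ_ne_zero, show j + a + 2 - 1 = j + a + 1 by omega,
    show j + a + 2 + r - (j + 1) - 1 = a + r by omega,
    show j + a + 2 + r - (j + 1) = a + r + 1 by omega,
    show j + a + 2 - (j + 1) = a + 1 by omega, Nat.add_sub_cancel]
  rcases lt_trichotomy r (j + 1) with hr | rfl | hr
  · rw [qBinom_of_lt (show a + r < j + a + 2 by omega),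
      qBinom_of_lt (show a + r + 1 < j + a + 2 by omega), qBinom_of_lt hr]
    ring
  · rw [qBinom_of_lt (show a + (j + 1) < j + a + 2 by omega),
      show a + (j + 1) + 1 = j + a + 2 by omega, show a + (j + 1) = j + a + 1 by omega,
      qBinom_self, qBinom_self,
      qBinom_symm (show j + (a + 1) = j + a + 1 by omega)]
    ring
  · obtain ⟨b, rfl⟩ : ∃ b, r = j + b + 2 := ⟨r - j - 2, by omega⟩
    rw [show a + (j + b + 2) = j + a + b + 2 by omega]
    exact qBinom_magic_identity_of_pos_of_lt j a b

/-- The `q`-binomial identity of D'Adderio–Vanden Wyngaerd (Lemma 2.12); the term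
`qbinom (h-1) (i-1)` is interpreted as `0` when `i = 0` (lower index `-1`). -/
theorem qBinom_magic_identity (h r i : ℕ) (hh : 1 ≤ h) (hi : i ≤ h - 1) :
    RatFunc.X ^ i * qBinom (h - 1) i * qBinom (h + r - i - 1) h
      + (if i = 0 then 0 else qBinom (h - 1) (i - 1)) * qBinom (h + r - i) h
    = qBinom r i * qBinom (h + r - i - 1) (h - i) :=
  qBinom_magic_identity_general h r i hi
end

section
/- For natural numbers n ≥ 1 and k ≥ 0, the complete homogeneous symmetric polynomial h_k evaluated at the k variables being the n quantities 1, q, q^2, ..., q^{n-1} equals the Gaussian binomial coefficient qbinom(n+k-1, k), i.e., h_k(1, q, ..., q^{n-1}) = (q^n; q)_k / (q; q)_k = qbinom(n+k-1, k). -/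
open Finset

/-- The `q`-rising factorial `(a; q)_s = (1-a)(1-qa)⋯(1-q^(s-1)a)`. -/
noncomputable def qPoch (a : RatFunc ℚ) (s : ℕ) : RatFunc ℚ :=
  ∏ i ∈ Finset.range s, (1 - RatFunc.X ^ i * a)

/-- The complete homogeneous symmetric polynomial `h_k` evaluated at the `n` quantities
`1, q, q², …, q^(n-1)`: the sum over all multisets of size `k` drawn from `{0, …, n-1}`
of `q` raised to the sum of the chosen exponents. -/
noncomputable def hEvalPowers (n k : ℕ) : Polynomial ℚ :=
  ∑ m ∈ (Finset.range n).sym k, Polynomial.X ^ ((m : Sym ℕ k).1.sum)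

/-! Sorting the multisets by whether they contain the largest exponent `n` gives the `q`-Pascal
recursion `h_{k+1}(1, …, qⁿ) = h_{k+1}(1, …, qⁿ⁻¹) + qⁿ h_k(1, …, qⁿ)`, which the ratio
`(qⁿ; q)_k / (q; q)_k` satisfies as well. The Gaussian binomial form then follows from
`[j]_q! (1 - q)^j = (q; q)_j` and `(q; q)_{m+k} = (q; q)_m (q^{m+1}; q)_k`. -/

namespace Finset

variable {α : Type*} [DecidableEq α]

theorem sym_insert_succ (s : Finset α) (a : α) (k : ℕ) :
    (insert a s).sym (k + 1) = s.sym (k + 1) ∪ ((insert a s).sym k).image (Sym.cons a) := by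
  ext m
  simp only [mem_union, mem_image, mem_sym_iff, mem_insert]
  constructor
  · intro hm
    by_cases ham : a ∈ m
    · obtain ⟨t, rfl⟩ := Sym.exists_cons_of_mem ham
      exact .inr ⟨t, fun b hb => hm b (Sym.mem_cons_of_mem hb), rfl⟩
    · exact .inl fun b hb => (hm b hb).resolve_left (ne_of_mem_of_not_mem hb ham)
  · rintro (hm | ⟨t, ht, rfl⟩) b hb
    · exact .inr (hm b hb)
    · exact (Sym.mem_cons.1 hb).elim .inl (ht b)

theorem disjoint_sym_image_cons {s : Finset α} {a : α} {k : ℕ} (ha : a ∉ s) (t : Finset α) :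
    Disjoint (s.sym (k + 1)) ((t.sym k).image (Sym.cons a)) := by
  simp only [disjoint_right, mem_image, mem_sym_iff]
  rintro _ ⟨m, -, rfl⟩ hm
  exact ha (hm a (Sym.mem_cons_self a m))

theorem sum_sym_insert_succ {M : Type*} [AddCommMonoid M] {s : Finset α} {a : α} {k : ℕ}
    (ha : a ∉ s) (f : Sym α (k + 1) → M) :
    ∑ m ∈ (insert a s).sym (k + 1), f m
      = ∑ m ∈ s.sym (k + 1), f m + ∑ m ∈ (insert a s).sym k, f (a ::ₛ m) := by
  rw [sym_insert_succ, sum_union (disjoint_sym_image_cons ha _),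
    sum_image fun m _ m' _ => (Sym.cons_inj_right a m m').1]

end Finset

theorem hEvalPowers_zero_right (n : ℕ) : hEvalPowers n 0 = 1 := by
  rw [hEvalPowers, sym_zero, sum_singleton]
  exact pow_zero _

theorem hEvalPowers_zero_succ (k : ℕ) : hEvalPowers 0 (k + 1) = 0 := by
  simp [hEvalPowers]

theorem hEvalPowers_succ_succ (n k : ℕ) :
    hEvalPowers (n + 1) (k + 1)
      = hEvalPowers n (k + 1) + Polynomial.X ^ n * hEvalPowers (n + 1) k := by
  rw [hEvalPowers, range_add_one, sum_sym_insert_succ notMem_range_self, hEvalPowers, hEvalPowers,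
    range_add_one, mul_sum]
  congr 1
  refine sum_congr rfl fun m _ => ?_
  change Polynomial.X ^ (n ::ₘ m.1).sum = _
  rw [Multiset.sum_cons, pow_add]

open RatFunc

theorem one_sub_X_pow_ne_zero {K : Type*} [Field K] {j : ℕ} (hj : j ≠ 0) :
    (1 : RatFunc K) - X ^ j ≠ 0 := by
  have h := Polynomial.X_pow_sub_C_ne_zero (Nat.pos_of_ne_zero hj) (1 : K)
  rw [← neg_ne_zero, neg_sub]
  simpa using (map_ne_zero_iff _ (RatFunc.algebraMap_injective K)).2 h

section qPoch

variable (a : RatFunc ℚ) (s t : ℕ)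

@[simp] theorem qPoch_zero : qPoch a 0 = 1 := prod_range_zero _

theorem qPoch_succ : qPoch a (s + 1) = qPoch a s * (1 - X ^ s * a) := prod_range_succ _ _

theorem qPoch_succ' : qPoch a (s + 1) = (1 - a) * qPoch (X * a) s := by
  rw [qPoch, prod_range_succ', pow_zero, one_mul, mul_comm, qPoch]
  congr 1
  exact prod_congr rfl fun i _ => by rw [pow_succ, mul_assoc]

theorem qPoch_add : qPoch a (s + t) = qPoch a s * qPoch (X ^ s * a) t := by
  rw [qPoch, prod_range_add, qPoch, qPoch]
  congr 1
  exact prod_congr rfl fun i _ => by ring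

theorem qPoch_X_ne_zero : qPoch X s ≠ 0 :=
  prod_ne_zero_iff.2 fun i _ => by
    rw [← pow_succ]
    exact one_sub_X_pow_ne_zero i.succ_ne_zero

end qPoch

theorem algebraMap_hEvalPowers_mul_qPoch (n k : ℕ) :
    algebraMap (Polynomial ℚ) (RatFunc ℚ) (hEvalPowers n k) * qPoch X k = qPoch (X ^ n) k := by
  induction k generalizing n with
  | zero => simp [hEvalPowers_zero_right]
  | succ k ihk =>
    induction n with
    | zero => simp [hEvalPowers_zero_succ, qPoch_succ']
    | succ n ihn =>
      rw [hEvalPowers_succ_succ, map_add, map_mul, map_pow, algebraMap_X, add_mul, ihn, mul_assoc,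
        qPoch_succ X k, ← mul_assoc (algebraMap _ _ _), ihk, qPoch_succ' (X ^ n), ← pow_succ',
        qPoch_succ (X ^ (n + 1))]
      -- `(1 - qⁿ) + qⁿ (1 - q^{k+1}) = 1 - q^{n+k+1}`, times `(q^{n+1}; q)_k`
      ring

theorem algebraMap_hEvalPowers_eq_qPoch_div (n k : ℕ) :
    algebraMap (Polynomial ℚ) (RatFunc ℚ) (hEvalPowers n k) = qPoch (X ^ n) k / qPoch X k :=
  eq_div_of_mul_eq (qPoch_X_ne_zero k) (algebraMap_hEvalPowers_mul_qPoch n k)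

theorem qFact_mul_one_sub_X_pow (m : ℕ) : qFact m * (1 - X) ^ m = qPoch X m := by
  induction m with
  | zero => simp [qFact]
  | succ m ih =>
    rw [qFact, qPoch_succ, ← ih, ← pow_succ, qInt, ← geom_sum_mul_neg]
    ring

theorem qBinom_add_eq_qPoch_div (m k : ℕ) :
    qBinom (m + k) k = qPoch (X ^ (m + 1)) k / qPoch X k := by
  have hX : (1 : RatFunc ℚ) - X ≠ 0 := by simpa using one_sub_X_pow_ne_zero (K := ℚ) one_ne_zero
  have hfact (j : ℕ) : qFact j = qPoch X j / (1 - X) ^ j :=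
    eq_div_of_mul_eq (pow_ne_zero j hX) (qFact_mul_one_sub_X_pow j)
  rw [qBinom, if_pos (Nat.le_add_left k m), Nat.add_sub_cancel, hfact, hfact, hfact, qPoch_add,
    ← pow_succ]
  have hm := qPoch_X_ne_zero m
  have hk := qPoch_X_ne_zero k
  field_simp
  ring

theorem hsymm_eval_qpowers (n k : ℕ) (hn : 1 ≤ n) :
    algebraMap (Polynomial ℚ) (RatFunc ℚ) (hEvalPowers n k)
        = qPoch (RatFunc.X ^ n) k / qPoch RatFunc.X k ∧
      algebraMap (Polynomial ℚ) (RatFunc ℚ) (hEvalPowers n k) = qBinom (n + k - 1) k := by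
  obtain ⟨m, rfl⟩ := Nat.exists_eq_add_of_le' hn
  have h := algebraMap_hEvalPowers_eq_qPoch_div (m + 1) k
  refine ⟨h, h.trans ?_⟩
  rw [Nat.add_right_comm, Nat.add_sub_cancel, qBinom_add_eq_qPoch_div]
end

section
/- There is a bijective correspondence between m × n parallelogram polyominoes and Dyck words of length m + n in the ordered alphabet 0̄ < 1 < 1̄ < 2 < 2̄ < ⋯ with exactly one letter 0̄ (occurring as the first letter), exactly m unbarred letters, and exactly n barred letters, for all m, n ≥ 1. -/
open Finset

/-! ## Lattice-path preliminaries for parallelogram polyominoes.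
Paths are lists of booleans: `true` = north step, `false` = east step. -/

/-- Interlacing `D = (r₁, 1-g₁, r₂, 1-g₂, …)` of the red path and the complemented green path. -/
def interlace : List Bool → List Bool → List Bool
  | [], _ => []
  | _ :: _, [] => []
  | a :: as, b :: bs => a :: (!b) :: interlace as bs

/-- Reading levels along a 0/1 word: on a `true` record the current level and go up one level,
on a `false` go down one level (recording nothing). -/
def levels : List Bool → ℕ → List ℕ
  | [], _ => []
  | true :: rest, l => l :: levels rest (l + 1)
  | false :: rest, l => levels rest (l - 1)

def countTrue (l : List Bool) : ℕ := (l.filter fun b => b = true).length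
def countFalse (l : List Bool) : ℕ := (l.filter fun b => b = false).length

/-- The number of `true`s (north steps) occurring before the `(x+1)`-st `false` (east step):
the height of the path along the column `x ↦ x+1`. -/
def colHeight : List Bool → ℕ → ℕ
  | [], _ => 0
  | true :: rest, k => colHeight rest k + 1
  | false :: _, 0 => 0
  | false :: rest, k + 1 => colHeight rest k

/-- The number of `false`s (east steps) occurring before the `(y+1)`-st `true` (north step). -/
def colX (p : List Bool) (y : ℕ) : ℕ := colHeight (p.map fun b => !b) y

/-- `r` and `g` are the red (upper) and green (lower) boundary paths of an `m × n`
parallelogram polyomino: both go from `(0,0)` to `(m,n)` and the red one stays strictly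
above the green one except at the endpoints. -/
def IsPolyo (m n : ℕ) (r g : List Bool) : Prop :=
  r.length = m + n ∧ g.length = m + n ∧ countTrue r = n ∧ countTrue g = n ∧
    ∀ i : ℕ, 1 ≤ i → i < m + n → countTrue (g.take i) < countTrue (r.take i)

/-- Reduced parallelogram polyomino: the red path stays weakly above the green one. -/
def IsRPolyo (m n : ℕ) (r g : List Bool) : Prop :=
  r.length = m + n ∧ g.length = m + n ∧ countTrue r = n ∧ countTrue g = n ∧
    ∀ i : ℕ, countTrue (g.take i) ≤ countTrue (r.take i)

/-- The area word of a (standard) parallelogram polyomino, as the list of letters of the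
alphabet `0̄ < 1 < 1̄ < 2 < 2̄ < ⋯` encoded by their indices `0, 1, 2, 3, 4, …`.
Barred letters have even index, unbarred letters odd index. -/
def areaWord (r g : List Bool) : List ℕ := levels (interlace r g) 0

/-- The numerical value of the letter with index `j` in the alphabet `0̄ < 1 < 1̄ < 2 < ⋯`. -/
def wval (j : ℕ) : ℕ := (j + 1) / 2

/-- The number of unit cells strictly between the two boundary paths. -/
def cellArea (m : ℕ) (r g : List Bool) : ℕ :=
  ∑ x ∈ Finset.range m, (colHeight r x - colHeight g x)

/-- `area` as the sum of the values of the letters of the area word. -/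
def areaStat (r g : List Bool) : ℕ := ((areaWord r g).map wval).sum

/-- `dinv`: the number of pairs of letters of the area word such that the rightmost letter is
the successor (in the alphabet `0̄ < 1 < 1̄ < ⋯`) of the leftmost one. -/
def dinvStat (r g : List Bool) : ℕ :=
  ((Finset.range (areaWord r g).length ×ˢ Finset.range (areaWord r g).length).filter
    fun p => p.1 < p.2 ∧ (areaWord r g).getD p.2 0 = (areaWord r g).getD p.1 0 + 1).card

/-- A rise of the area word: a barred letter immediately followed by its successor. -/
def IsRise (w : List ℕ) (i : ℕ) : Prop :=
  i + 1 < w.length ∧ w.getD i 0 % 2 = 0 ∧ w.getD (i + 1) 0 = w.getD i 0 + 1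

/-- `underlined area`: the sum of the values of the letters of the area word, ignoring the
(barred) letters at the decorated positions `D`. -/
def uareaStat (r g : List Bool) (D : Finset ℕ) : ℕ :=
  ∑ i ∈ Finset.range (areaWord r g).length \ D, wval ((areaWord r g).getD i 0)

/-- A Dyck word in the totally ordered alphabet `0̄ < 1 < 1̄ < 2 < 2̄ < ⋯` (letters encoded by
their indices): whenever a letter is greater than its predecessor, it is its immediate
successor. Unbarred letters have odd index, barred letters even index. -/
def IsDyckWordAlpha (w : List ℕ) : Prop :=
  ∀ i : ℕ, i + 1 < w.length → w.getD i 0 < w.getD (i + 1) 0 →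
    w.getD (i + 1) 0 = w.getD i 0 + 1

/-!
Interlacing the red path with the complemented green path gives a walk `D` whose level after
`2 * i` steps is twice the vertical gap between the two paths after `i` steps. So `(r, g)` is an
`m × n` polyomino exactly when `D` is a Dyck path returning to level `0` only at its end, and the
area word is the sequence of levels of the up steps of `D`. A Dyck path is recovered from that
sequence by descending to each letter just before the corresponding up step. Along `D` the level
has the parity of the position, so north steps of the red path give the barred (even) letters and
east steps of the green path the unbarred (odd) ones, while an interior return to level `0` would
give a second letter `0̄`.
-/

@[simp] lemma countTrue_nil : countTrue [] = 0 := rfl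

@[simp] lemma countFalse_nil : countFalse [] = 0 := rfl

@[simp] lemma countTrue_cons (x : Bool) (t : List Bool) :
    countTrue (x :: t) = countTrue t + x.toNat := by
  cases x <;> simp [countTrue]

@[simp] lemma countFalse_cons (x : Bool) (t : List Bool) :
    countFalse (x :: t) = countFalse t + (!x).toNat := by
  cases x <;> simp [countFalse]

lemma countTrue_add_countFalse (l : List Bool) : countTrue l + countFalse l = l.length := by
  rw [List.length_eq_length_filter_add (fun b => b = true)]
  simp [countTrue, countFalse]

def finalLevel : List Bool → ℕ → ℕ
  | [], l => l
  | true :: D, l => finalLevel D (l + 1)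
  | false :: D, l => finalLevel D (l - 1)

/-- `levels` and `finalLevel` truncate at level `0`; along a nonnegative walk this never
happens. -/
def NonnegWalk : List Bool → ℕ → Prop
  | [], _ => True
  | true :: D, l => NonnegWalk D (l + 1)
  | false :: D, l => 1 ≤ l ∧ NonnegWalk D (l - 1)

section Walks

variable {D xs ys : List Bool} {l : ℕ}

@[simp] lemma finalLevel_replicate_false (k : ℕ) :
    finalLevel (List.replicate k false) l = l - k := by
  induction k generalizing l with
  | zero => rfl
  | succ k ih => simp only [List.replicate_succ, finalLevel, ih]; omega

lemma nonnegWalk_append :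
    NonnegWalk (xs ++ ys) l ↔ NonnegWalk xs l ∧ NonnegWalk ys (finalLevel xs l) := by
  induction xs generalizing l with
  | nil => simp [NonnegWalk, finalLevel]
  | cons x t ih => cases x <;> simp [NonnegWalk, finalLevel, ih, and_assoc]

@[simp] lemma nonnegWalk_replicate_false (k : ℕ) :
    NonnegWalk (List.replicate k false) l ↔ k ≤ l := by
  induction k generalizing l with
  | zero => simp [NonnegWalk]
  | succ k ih => simp only [List.replicate_succ, NonnegWalk, ih]; omega

lemma NonnegWalk.take (h : NonnegWalk D l) (j : ℕ) : NonnegWalk (D.take j) l :=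
  (nonnegWalk_append.1 ((List.take_append_drop j D).symm ▸ h)).1

lemma levels_append : levels (xs ++ ys) l = levels xs l ++ levels ys (finalLevel xs l) := by
  induction xs generalizing l with
  | nil => rfl
  | cons x t ih => cases x <;> simp [levels, finalLevel, ih]

@[simp] lemma levels_replicate_false (k : ℕ) : levels (List.replicate k false) l = [] := by
  induction k generalizing l with
  | zero => rfl
  | succ k ih => simp [List.replicate_succ, levels, ih]

lemma length_levels : (levels D l).length = countTrue D := by
  induction D generalizing l with
  | nil => rfl
  | cons x t ih => cases x <;> simp [levels, ih]

lemma NonnegWalk.finalLevel_add_countFalse (h : NonnegWalk D l) :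
    finalLevel D l + countFalse D = l + countTrue D := by
  induction D generalizing l with
  | nil => rfl
  | cons x t ih =>
    cases x
    · have := h.1
      have := ih h.2
      simp only [finalLevel, countFalse_cons, countTrue_cons, Bool.not_false, Bool.toNat_true,
        Bool.toNat_false] at this ⊢
      omega
    · have := ih h
      simp only [finalLevel, countFalse_cons, countTrue_cons, Bool.not_true, Bool.toNat_true,
        Bool.toNat_false] at this ⊢
      omega

lemma NonnegWalk.exists_levels_eq_zero_cons (h : NonnegWalk D 0) (hD : D ≠ []) :
    ∃ t, levels D 0 = 0 :: t := by
  match D, h with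
  | [], _ => exact absurd rfl hD
  | true :: _, _ => exact ⟨_, rfl⟩
  | false :: _, h => exact absurd h.1 (by omega)

lemma NonnegWalk.two_le_count_zero (h : NonnegWalk D 0) {j : ℕ} (hj0 : 0 < j)
    (hjD : j < D.length) (hret : finalLevel (D.take j) 0 = 0) : 2 ≤ (levels D 0).count 0 := by
  rw [← List.take_append_drop j D] at h ⊢
  obtain ⟨hpre, hsuf⟩ := nonnegWalk_append.1 h
  rw [hret] at hsuf
  obtain ⟨t₁, ht₁⟩ := hpre.exists_levels_eq_zero_cons
    (List.ne_nil_of_length_pos (by rw [List.length_take]; omega))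
  obtain ⟨t₂, ht₂⟩ := hsuf.exists_levels_eq_zero_cons
    (List.ne_nil_of_length_pos (by rw [List.length_drop]; omega))
  rw [levels_append, hret, ht₁, ht₂]
  simp only [List.cons_append, List.count_append, List.count_cons_self]
  omega

end Walks

/-- `w` is the sequence of levels of the up steps of a walk started at level `l`. -/
def IsLevelSeq : ℕ → List ℕ → Prop
  | _, [] => True
  | l, a :: w => a ≤ l ∧ IsLevelSeq (a + 1) w

def ofLevelsFrom : ℕ → List ℕ → List Bool
  | l, [] => List.replicate l false
  | l, a :: w => List.replicate (l - a) false ++ true :: ofLevelsFrom (a + 1) w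

section LevelSequences

variable {D : List Bool} {w : List ℕ} {l : ℕ}

lemma IsLevelSeq.mono {l' : ℕ} (h : IsLevelSeq l w) (hl : l ≤ l') : IsLevelSeq l' w := by
  cases w with
  | nil => trivial
  | cons a w => exact ⟨h.1.trans hl, h.2⟩

lemma IsLevelSeq.head_le (h : IsLevelSeq l w) : ∀ a ∈ w.head?, a ≤ l := by
  cases w with
  | nil => simp
  | cons a w => simpa using h.1

lemma isLevelSeq_levels : IsLevelSeq l (levels D l) := by
  induction D generalizing l with
  | nil => trivial
  | cons x t ih =>
    cases x
    · exact ih.mono (Nat.sub_le l 1)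
    · exact ⟨le_rfl, ih⟩

lemma isDyckWordAlpha_iff_isChain :
    IsDyckWordAlpha w ↔ w.IsChain (fun x y => y ≤ x + 1) := by
  rw [List.isChain_iff_getElem]
  refine forall_congr' fun i => ⟨fun h hi => ?_, fun h hi hlt => ?_⟩ <;> have := h hi <;>
    simp only [List.getD_eq_getElem _ _ hi,
      List.getD_eq_getElem _ _ (Nat.lt_of_succ_lt hi)] at * <;> omega

lemma IsLevelSeq.isChain (h : IsLevelSeq l w) : w.IsChain (fun x y => y ≤ x + 1) := by
  induction w generalizing l with
  | nil => exact .nil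
  | cons a w ih =>
    cases w with
    | nil => exact .singleton a
    | cons b w => exact List.isChain_cons_cons.2 ⟨h.2.1, ih h.2⟩

lemma isLevelSeq_of_isChain {a : ℕ} (h : (a :: w).IsChain (fun x y => y ≤ x + 1)) :
    IsLevelSeq a (a :: w) := by
  induction w generalizing a with
  | nil => exact ⟨le_rfl, trivial⟩
  | cons b w ih =>
    obtain ⟨hab, hb⟩ := List.isChain_cons_cons.1 h
    exact ⟨le_rfl, (ih hb).mono hab⟩

lemma ofLevelsFrom_succ (h : ∀ a ∈ w.head?, a ≤ l) :
    ofLevelsFrom (l + 1) w = false :: ofLevelsFrom l w := by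
  cases w with
  | nil => rfl
  | cons a w =>
    have ha : a ≤ l := h a rfl
    simp only [ofLevelsFrom, Nat.succ_sub ha, List.replicate_succ, List.cons_append]

lemma NonnegWalk.ofLevelsFrom_levels (h : NonnegWalk D l) :
    ofLevelsFrom l (levels D l) = D ++ List.replicate (finalLevel D l) false := by
  induction D generalizing l with
  | nil => simp [levels, ofLevelsFrom, finalLevel]
  | cons x t ih =>
    cases x
    · obtain ⟨k, rfl⟩ : ∃ k, l = k + 1 := ⟨l - 1, by have := h.1; omega⟩
      have ht : NonnegWalk t k := h.2
      simp only [levels, finalLevel, Nat.add_sub_cancel]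
      rw [ofLevelsFrom_succ isLevelSeq_levels.head_le, ih ht, List.cons_append]
    · simp [levels, ofLevelsFrom, finalLevel, ih h]

lemma IsLevelSeq.levels_ofLevelsFrom (h : IsLevelSeq l w) : levels (ofLevelsFrom l w) l = w := by
  induction w generalizing l with
  | nil => simp [ofLevelsFrom]
  | cons a w ih =>
    simp only [ofLevelsFrom, levels_append, levels_replicate_false, finalLevel_replicate_false,
      Nat.sub_sub_self h.1, List.nil_append, levels, ih h.2]

lemma IsLevelSeq.nonnegWalk_ofLevelsFrom (h : IsLevelSeq l w) :
    NonnegWalk (ofLevelsFrom l w) l := by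
  induction w generalizing l with
  | nil => simp [ofLevelsFrom]
  | cons a w ih =>
    simp only [ofLevelsFrom, nonnegWalk_append, nonnegWalk_replicate_false,
      finalLevel_replicate_false, Nat.sub_sub_self h.1, NonnegWalk]
    exact ⟨Nat.sub_le l a, ih h.2⟩

lemma IsLevelSeq.length_ofLevelsFrom (h : IsLevelSeq l w) :
    (ofLevelsFrom l w).length = 2 * w.length + l := by
  induction w generalizing l with
  | nil => simp [ofLevelsFrom]
  | cons a w ih =>
    have := ih h.2
    have := h.1
    simp only [ofLevelsFrom, List.length_append, List.length_replicate, List.length_cons] at *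
    omega

end LevelSequences

def deinterlace : List Bool → List Bool × List Bool
  | [] => ([], [])
  | [_] => ([], [])
  | a :: b :: D => (a :: (deinterlace D).1, (!b) :: (deinterlace D).2)

section Interlace

variable {r g : List Bool}

@[simp] lemma interlace_cons_cons (a b : Bool) (r g : List Bool) :
    interlace (a :: r) (b :: g) = a :: (!b) :: interlace r g := rfl

lemma interlace_take (i : ℕ) :
    (interlace r g).take (2 * i) = interlace (r.take i) (g.take i) := by
  induction i generalizing r g with
  | zero => simp [interlace]
  | succ i ih =>
    match r, g with
    | [], _ => simp [interlace]
    | _ :: _, [] => simp [interlace]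
    | a :: r, b :: g => simp [Nat.mul_succ, ih]

lemma countTrue_interlace (h : r.length = g.length) :
    countTrue (interlace r g) = countTrue r + countFalse g := by
  induction r generalizing g with
  | nil => cases g <;> simp_all [interlace]
  | cons a r ih =>
    obtain _ | ⟨b, g⟩ := g
    · simp at h
    · simp only [interlace_cons_cons, countTrue_cons, countFalse_cons, ih (by simpa using h)]
      ring

lemma countFalse_interlace (h : r.length = g.length) :
    countFalse (interlace r g) = countFalse r + countTrue g := by
  induction r generalizing g with
  | nil => cases g <;> simp_all [interlace]
  | cons a r ih =>
    obtain _ | ⟨b, g⟩ := g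
    · simp at h
    · simp only [interlace_cons_cons, countFalse_cons, countTrue_cons, Bool.not_not,
        ih (by simpa using h)]
      ring

lemma deinterlace_interlace (h : r.length = g.length) : deinterlace (interlace r g) = (r, g) := by
  induction r generalizing g with
  | nil => cases g <;> simp_all [interlace, deinterlace]
  | cons a r ih =>
    obtain _ | ⟨b, g⟩ := g
    · simp at h
    · simp [deinterlace, ih (by simpa using h)]

lemma interlace_deinterlace : ∀ {D : List Bool}, Even D.length →
    interlace (deinterlace D).1 (deinterlace D).2 = D
  | [], _ => rfl
  | [_], h => by simp at h
  | a :: b :: D, h => by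
    simp [deinterlace, interlace_deinterlace (D := D) (by simpa [parity_simps] using h)]

lemma length_deinterlace : ∀ D : List Bool,
    (deinterlace D).1.length = D.length / 2 ∧ (deinterlace D).2.length = D.length / 2
  | [] | [_] => by simp [deinterlace]
  | a :: b :: D => by
    simp only [deinterlace, List.length_cons, length_deinterlace D]
    omega

end Interlace

section InterlacedWalks

variable {r g : List Bool}

lemma NonnegWalk.finalLevel_interlace_add {l : ℕ} (hrg : r.length = g.length)
    (h : NonnegWalk (interlace r g) l) :
    finalLevel (interlace r g) l + 2 * countTrue g = l + 2 * countTrue r := by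
  have := h.finalLevel_add_countFalse
  have := countTrue_add_countFalse r
  have := countTrue_add_countFalse g
  rw [countTrue_interlace hrg, countFalse_interlace hrg] at *
  omega

/-- On an interlaced walk the levels at the red steps are the even ones. -/
lemma NonnegWalk.count_parity_levels_interlace {l : ℕ} (hl : l % 2 = 0)
    (hrg : r.length = g.length) (h : NonnegWalk (interlace r g) l) :
    ((levels (interlace r g) l).filter fun j => j % 2 = 0).length = countTrue r ∧
      ((levels (interlace r g) l).filter fun j => j % 2 = 1).length = countFalse g := by
  induction r generalizing g l with
  | nil => cases g <;> simp_all [interlace, levels]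
  | cons a r ih =>
    obtain _ | ⟨b, g⟩ := g
    · simp at hrg
    cases a <;> cases b <;>
      simp only [interlace_cons_cons, NonnegWalk, levels, Bool.not_true, Bool.not_false] at h ⊢
    · obtain ⟨hl1, h⟩ := h
      rw [Nat.sub_add_cancel hl1] at h ⊢
      have hodd : (l - 1) % 2 = 1 := by omega
      obtain ⟨ih₀, ih₁⟩ := ih hl (by simpa using hrg) h
      simp [hodd, ih₀, ih₁]
    · obtain ⟨hl1, hl2, h⟩ := h
      obtain ⟨ih₀, ih₁⟩ := ih (by omega) (by simpa using hrg) h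
      simp [ih₀, ih₁]
    · obtain ⟨ih₀, ih₁⟩ := ih (by omega) (by simpa using hrg) h
      have hodd : (l + 1) % 2 = 1 := by omega
      simp [hl, hodd, ih₀, ih₁]
    · obtain ⟨-, h⟩ := h
      rw [Nat.add_sub_cancel] at h ⊢
      obtain ⟨ih₀, ih₁⟩ := ih hl (by simpa using hrg) h
      simp [hl, ih₀, ih₁]

lemma nonnegWalk_interlace_of_lt {c : ℕ} (hrg : r.length = g.length)
    (h : ∀ i < r.length, countTrue (g.take i) < countTrue (r.take i) + c) :
    NonnegWalk (interlace r g) (2 * c) ∧ ∀ x ∈ levels (interlace r g) (2 * c), 1 ≤ x := by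
  induction r generalizing g c with
  | nil => cases g <;> simp_all [interlace, levels, NonnegWalk]
  | cons a r ih =>
    obtain _ | ⟨b, g⟩ := g
    · simp at hrg
    have hc : 0 < c := by simpa using h 0 (by simp)
    have ih' := ih (c := c + a.toNat - b.toNat) (by simpa using hrg) fun i hi => by
      have := h (i + 1) (by simpa using hi)
      simp only [List.take_succ_cons, countTrue_cons] at this
      omega
    cases a <;> cases b <;>
      simp only [Bool.toNat_true, Bool.toNat_false, interlace_cons_cons, Bool.not_true,
        Bool.not_false, NonnegWalk, levels, List.mem_cons] at ih' ⊢
    · rw [show 2 * c - 1 + 1 = 2 * (c + 0 - 0) by omega]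
      exact ⟨⟨by omega, ih'.1⟩, by rintro x (rfl | hx) <;> [omega; exact ih'.2 x hx]⟩
    · rw [show 2 * c - 1 - 1 = 2 * (c + 0 - 1) by omega]
      exact ⟨⟨by omega, by omega, ih'.1⟩, ih'.2⟩
    · rw [show 2 * c + 1 + 1 = 2 * (c + 1 - 0) by omega]
      exact ⟨ih'.1, by rintro x (rfl | rfl | hx) <;> [omega; omega; exact ih'.2 x hx]⟩
    · rw [show 2 * c + 1 - 1 = 2 * (c + 1 - 1) by omega]
      exact ⟨⟨by omega, ih'.1⟩, by rintro x (rfl | hx) <;> [omega; exact ih'.2 x hx]⟩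

end InterlacedWalks

def IsPolyoAreaWord (m n : ℕ) (w : List ℕ) : Prop :=
  IsDyckWordAlpha w ∧ w.length = m + n ∧ w.head? = some 0 ∧ w.count 0 = 1 ∧
    (w.filter fun j => j % 2 = 1).length = m ∧ (w.filter fun j => j % 2 = 0).length = n

def polyoOfWord (w : List ℕ) : List Bool × List Bool := deinterlace (ofLevelsFrom 0 w)

namespace IsPolyo

variable {m n : ℕ} {r g : List Bool}

lemma nonnegWalk_interlace (h : IsPolyo m n r g) (hmn : 2 ≤ m + n) :
    NonnegWalk (interlace r g) 0 ∧ (areaWord r g).head? = some 0 ∧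
      ∀ x ∈ (areaWord r g).tail, 1 ≤ x := by
  obtain ⟨hr, hg, -, -, hlt⟩ := h
  obtain _ | ⟨a, r⟩ := r
  · simp only [List.length_nil] at hr; omega
  obtain _ | ⟨b, g⟩ := g
  · simp only [List.length_nil] at hg; omega
  have h1 := hlt 1 le_rfl (by omega)
  obtain ⟨rfl, rfl⟩ : a = true ∧ b = false := by
    cases a <;> cases b <;> simp at h1 ⊢
  simp only [List.length_cons] at hr hg
  have hpos := nonnegWalk_interlace_of_lt (r := r) (g := g) (c := 1) (by omega) fun i hi => by
    have := hlt (i + 1) (by omega) (by omega)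
    simp only [List.take_succ_cons, countTrue_cons, Bool.toNat_true, Bool.toNat_false] at this
    omega
  refine ⟨hpos.1, rfl, ?_⟩
  simp only [areaWord, interlace_cons_cons, Bool.not_false, levels, List.tail_cons,
    List.mem_cons]
  rintro x (rfl | hx)
  exacts [le_rfl, hpos.2 x hx]

lemma isPolyoAreaWord_areaWord (h : IsPolyo m n r g) (hmn : 2 ≤ m + n) :
    IsPolyoAreaWord m n (areaWord r g) := by
  obtain ⟨hnn, hhead, htail⟩ := h.nonnegWalk_interlace hmn
  obtain ⟨hr, hg, hrn, hgn, -⟩ := h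
  have hrg : r.length = g.length := hr.trans hg.symm
  have hgm : countFalse g = m := by have := countTrue_add_countFalse g; omega
  obtain ⟨hev, hodd⟩ := hnn.count_parity_levels_interlace rfl hrg
  refine ⟨isDyckWordAlpha_iff_isChain.2 isLevelSeq_levels.isChain, ?_, hhead, ?_, ?_, ?_⟩
  · rw [areaWord, length_levels, countTrue_interlace hrg]
    omega
  · obtain ⟨t, ht⟩ : ∃ t, areaWord r g = 0 :: t := List.head?_eq_some_iff.1 hhead
    rw [ht] at htail ⊢
    simpa [List.count_eq_zero] using fun h0 => htail 0 h0
  · exact hodd.trans hgm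
  · exact hev.trans hrn

lemma polyoOfWord_areaWord (h : IsPolyo m n r g) (hmn : 2 ≤ m + n) :
    polyoOfWord (areaWord r g) = (r, g) := by
  have hnn := (h.nonnegWalk_interlace hmn).1
  obtain ⟨hr, hg, hrn, hgn, -⟩ := h
  have hrg : r.length = g.length := hr.trans hg.symm
  have hend : finalLevel (interlace r g) 0 = 0 := by
    have := hnn.finalLevel_interlace_add hrg
    omega
  rw [polyoOfWord, areaWord, hnn.ofLevelsFrom_levels, hend, List.replicate_zero,
    List.append_nil, deinterlace_interlace hrg]

end IsPolyo

namespace IsPolyoAreaWord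

variable {m n : ℕ} {w : List ℕ}

lemma isPolyo_polyoOfWord (h : IsPolyoAreaWord m n w) :
    IsPolyo m n (polyoOfWord w).1 (polyoOfWord w).2 ∧
      areaWord (polyoOfWord w).1 (polyoOfWord w).2 = w := by
  obtain ⟨hdyck, hlen, hhead, hcount, hodd, hev⟩ := h
  have hseq : IsLevelSeq 0 w := by
    obtain ⟨t, rfl⟩ := List.head?_eq_some_iff.1 hhead
    exact isLevelSeq_of_isChain (isDyckWordAlpha_iff_isChain.1 hdyck)
  set D := ofLevelsFrom 0 w with hDdef
  set r := (polyoOfWord w).1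
  set g := (polyoOfWord w).2
  have hDlen : D.length = 2 * (m + n) := by rw [hseq.length_ofLevelsFrom, hlen, Nat.add_zero]
  have hD : interlace r g = D := interlace_deinterlace (by rw [hDlen]; exact even_two_mul _)
  have hnn : NonnegWalk (interlace r g) 0 := hD ▸ hseq.nonnegWalk_ofLevelsFrom
  have hlevels : areaWord r g = w := by rw [areaWord, hD, hseq.levels_ofLevelsFrom]
  have hr : r.length = m + n := by simp [r, polyoOfWord, length_deinterlace, ← hDdef, hDlen]
  have hg : g.length = m + n := by simp [g, polyoOfWord, length_deinterlace, ← hDdef, hDlen]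
  have hrg : r.length = g.length := hr.trans hg.symm
  obtain ⟨hred, hgreen⟩ := hnn.count_parity_levels_interlace rfl hrg
  rw [← areaWord, hlevels] at hred hgreen
  have hgn : countTrue g = n := by
    have := countTrue_add_countFalse g
    omega
  -- If the green path caught up with the red one after `i` steps, the walk would be back at
  -- level `0` after `2 * i` steps and the area word would contain a second `0̄`.
  have hstrict (i : ℕ) (hi0 : 1 ≤ i) (hi : i < m + n) :
      countTrue (g.take i) < countTrue (r.take i) := by
    by_contra hle
    have hwalk := hnn.take (2 * i)
    rw [interlace_take] at hwalk
    have hret := hwalk.finalLevel_interlace_add (by simp [hr, hg])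
    have := hnn.two_le_count_zero (j := 2 * i) (by omega) (by rw [hD, hDlen]; omega)
      (by rw [interlace_take]; omega)
    rw [← areaWord, hlevels] at this
    omega
  exact ⟨⟨hr, hg, hred.symm.trans hev, hgn, hstrict⟩, hlevels⟩

end IsPolyoAreaWord

/-- Bijective correspondence (given by the area word) between `m × n` parallelogram
polyominoes and Dyck words of length `m + n` in the alphabet `0̄ < 1 < 1̄ < 2 < ⋯` with
exactly one `0̄` (as first letter), exactly `m` unbarred letters and `n` barred letters. -/
theorem polyomino_equiv_dyckWords (m n : ℕ) (hm : 1 ≤ m) (hn : 1 ≤ n) :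
    ∃ e : { p : List Bool × List Bool // IsPolyo m n p.1 p.2 } ≃
        { w : List ℕ // IsDyckWordAlpha w ∧ w.length = m + n ∧ w.head? = some 0 ∧
            w.count 0 = 1 ∧ (w.filter fun j => j % 2 = 1).length = m ∧
            (w.filter fun j => j % 2 = 0).length = n },
      ∀ P, (e P : List ℕ) = areaWord P.val.1 P.val.2 := by
  have hmn : 2 ≤ m + n := by omega
  exact ⟨{ toFun := fun P => ⟨areaWord P.1.1 P.1.2, P.2.isPolyoAreaWord_areaWord hmn⟩
           invFun := fun W => ⟨polyoOfWord W.1, (IsPolyoAreaWord.isPolyo_polyoOfWord W.2).1⟩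
           left_inv := fun P => Subtype.ext (P.2.polyoOfWord_areaWord hmn)
           right_inv := fun W => Subtype.ext (IsPolyoAreaWord.isPolyo_polyoOfWord W.2).2 },
    fun _ => rfl⟩
end
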